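/- Consider the linear mean-field system with exponential inhibition Φ_{B→A}(x) = exp(−τx) and Φ_{A→B}(x) = x, where τ > 0. Suppose κ₃ < 1, κ₂ > 0, κ₄ > 0, μ_A > 0, and set a = μ_B κ₂/(1−κ₃), b = κ₂κ₄/(1−κ₃). Assume κ₁ e^{−τa} < 1 and r(τ) := b μ_A τ e^{−τa} / (1 − κ₁ e^{−τa})² < 1. Then λ^B(t) → ℓ and λ^A(t) → μ_A e^{−τκ₂ℓ} / (1 − κ₁ e^{−τκ₂ℓ}) as t → ∞, where ℓ is the unique fixed point on [μ_B/(1−κ₃), ∞) of the map Φ(x) = a/κ₂ + b μ_A e^{−τκ₂x} / (κ₂(1 − κ₁ e^{−τκ₂x})). -/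

import Mathlib

open MeasureTheory Filter Topology Set
open scoped ENNReal

/-- Convolution term `∫₀ᵗ h(t-u) f(u) du`. -/
noncomputable def convK (h f : ℝ → ℝ) (t : ℝ) : ℝ :=
  ∫ u in (0:ℝ)..t, h (t - u) * f u

/-- `L¹` norm on `[0,∞)` of a kernel. -/
noncomputable def l1 (h : ℝ → ℝ) : ℝ :=
  ∫ s in Set.Ioi (0:ℝ), h s

/-- A nonnegative measurable kernel with finite `L¹` norm on `[0,∞)`. -/
def KernelL1 (h : ℝ → ℝ) : Prop :=
  Measurable h ∧ (∀ u, 0 ≤ u → 0 ≤ h u) ∧ IntegrableOn h (Set.Ioi 0)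

/-- A nonnegative integrable kernel vanishing at infinity. -/
def KernelOK (h : ℝ → ℝ) : Prop :=
  KernelL1 h ∧ Tendsto h atTop (𝓝 0)

/-- Properties of the inhibition kernel `Φ_{B→A}`. -/
def InhibOK (Φ : ℝ → ℝ) : Prop :=
  (∃ K, 0 ≤ K ∧ ∀ x y, 0 ≤ x → 0 ≤ y → |Φ x - Φ y| ≤ K * |x - y|) ∧
  AntitoneOn Φ (Set.Ici 0) ∧ Φ 0 = 1 ∧
  (∀ x, 0 ≤ x → 0 ≤ Φ x ∧ Φ x ≤ 1) ∧
  Tendsto Φ atTop (𝓝 0)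

/-- Properties of the feedback kernel `Φ_{A→B}`. -/
def FeedOK (Φ : ℝ → ℝ) : Prop :=
  (∃ K, 0 ≤ K ∧ ∀ x y, 0 ≤ x → 0 ≤ y → |Φ x - Φ y| ≤ K * |x - y|) ∧
  MonotoneOn Φ (Set.Ici 0) ∧ Φ 0 = 0 ∧
  (∀ x, 0 ≤ x → 0 ≤ Φ x) ∧
  Tendsto Φ atTop atTop

/-- The general mean-field system of intensities. -/
def IsGenSys (α : ℝ) (h₁ h₂ h₃ h₄ ΦA ΦB ΦBA ΦAB lA lB : ℝ → ℝ) : Prop :=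
  Continuous lA ∧ Continuous lB ∧ (∀ t, 0 ≤ lA t) ∧ (∀ t, 0 ≤ lB t) ∧
  (∀ t, 0 ≤ t →
    lA t = ΦA (α * convK h₁ lA t) * ΦBA ((1 - α) * convK h₂ lB t)) ∧
  (∀ t, 0 ≤ t →
    lB t = ΦB ((1 - α) * convK h₃ lB t) + ΦAB (α * convK h₄ lA t))

/-- The linear mean-field system: `Φ_A(x) = μ_A + x` and `Φ_B(x) = μ_B + x`. -/
def IsLinSys (α : ℝ) (h₁ h₂ h₃ h₄ ΦBA ΦAB : ℝ → ℝ) (μA μB : ℝ)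
    (lA lB : ℝ → ℝ) : Prop :=
  IsGenSys α h₁ h₂ h₃ h₄ (fun x => μA + x) (fun x => μB + x) ΦBA ΦAB lA lB

/-- `limsup_{t→∞} f(t)` with values in `[0,∞]`. -/
noncomputable def elimsup (f : ℝ → ℝ) : ℝ≥0∞ :=
  Filter.limsup (fun t => ENNReal.ofReal (f t)) Filter.atTop

/-- `liminf_{t→∞} f(t)` with values in `[0,∞]`. -/
noncomputable def eliminf (f : ℝ → ℝ) : ℝ≥0∞ :=
  Filter.liminf (fun t => ENNReal.ofReal (f t)) Filter.atTop

/-- The domain `I_{κ₁,κ₂} = {x ≥ 0 : κ₁ Φ_{B→A}(κ₂ x) < 1}`. -/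
def Idom (κ₁ κ₂ : ℝ) (ΦBA : ℝ → ℝ) : Set ℝ :=
  {x : ℝ | 0 ≤ x ∧ κ₁ * ΦBA (κ₂ * x) < 1}

/-- `Ψ₁(x) = μ_A Φ_{B→A}(κ₂x)/(1 - κ₁Φ_{B→A}(κ₂x))`. -/
noncomputable def Psi1 (μA κ₁ κ₂ : ℝ) (ΦBA : ℝ → ℝ) (x : ℝ) : ℝ :=
  μA * ΦBA (κ₂ * x) / (1 - κ₁ * ΦBA (κ₂ * x))

/-- `Ψ₂(x) = (μ_B + Φ_{A→B}(κ₄x))/(1-κ₃)`. -/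
noncomputable def Psi2 (μB κ₃ κ₄ : ℝ) (ΦAB : ℝ → ℝ) (x : ℝ) : ℝ :=
  (μB + ΦAB (κ₄ * x)) / (1 - κ₃)

/-- The fixed-point map `Φ = Ψ₂ ∘ Ψ₁`. -/
noncomputable def PhiMap (μA μB κ₁ κ₂ κ₃ κ₄ : ℝ) (ΦBA ΦAB : ℝ → ℝ) (x : ℝ) : ℝ :=
  Psi2 μB κ₃ κ₄ ΦAB (Psi1 μA κ₁ κ₂ ΦBA x)

/-- The set `U_Φ` of admissible pairs `(u,v)`. -/
def UPhi (μA μB κ₁ κ₂ κ₃ κ₄ : ℝ) (ΦBA ΦAB : ℝ → ℝ) (ℓ : ℝ) : Set (ℝ × ℝ) :=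
  {p : ℝ × ℝ | p.1 ∈ Idom κ₁ κ₂ ΦBA ∧ p.2 ∈ Idom κ₁ κ₂ ΦBA ∧
    PhiMap μA μB κ₁ κ₂ κ₃ κ₄ ΦBA ΦAB p.2 ≤ p.1 ∧ p.1 ≤ ℓ ∧ ℓ ≤ p.2 ∧
    p.2 ≤ PhiMap μA μB κ₁ κ₂ κ₃ κ₄ ΦBA ΦAB p.1 ∧ μB / (1 - κ₃) ≤ p.1}

section ker
variable {h f : ℝ → ℝ}

lemma l1_nonneg (hk : KernelL1 h) : 0 ≤ l1 h := by
  apply setIntegral_nonneg measurableSet_Ioi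
  exact fun u hu => hk.2.1 u (le_of_lt hu)

lemma kernel_intervalIntegrable (hk : KernelL1 h) {t : ℝ} (ht : 0 ≤ t) :
    IntervalIntegrable h volume 0 t := by
  rw [intervalIntegrable_iff_integrableOn_Ioc_of_le ht]
  exact hk.2.2.mono_set (Ioc_subset_Ioi_self)

/-- partial integral of kernel is ≤ l1 -/
lemma partial_le_l1 (hk : KernelL1 h) {t : ℝ} (ht : 0 ≤ t) :
    (∫ s in (0:ℝ)..t, h s) ≤ l1 h := by
  rw [intervalIntegral.integral_of_le ht]
  unfold l1
  apply setIntegral_mono_set hk.2.2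
  · filter_upwards [ae_restrict_mem measurableSet_Ioi] with u hu using hk.2.1 u (le_of_lt hu)
  · exact HasSubset.Subset.eventuallyLE Ioc_subset_Ioi_self

lemma partial_nonneg (hk : KernelL1 h) {s t : ℝ} (hst : s ≤ t) (hs : 0 ≤ s) :
    0 ≤ ∫ u in s..t, h u := by
  apply intervalIntegral.integral_nonneg hst
  intro u hu; exact hk.2.1 u (le_trans hs hu.1)

/-- tail `∫_{t-T}^t h → 0` -/
lemma tail_tendsto (hk : KernelL1 h) (T : ℝ) (hT : 0 ≤ T) :
    Tendsto (fun t => ∫ s in (t - T)..t, h s) atTop (𝓝 0) := by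
  have h1 : Tendsto (fun t : ℝ => ∫ s in (0:ℝ)..t, h s) atTop (𝓝 (l1 h)) :=
    intervalIntegral_tendsto_integral_Ioi 0 hk.2.2 tendsto_id
  have h2 : Tendsto (fun t : ℝ => ∫ s in (0:ℝ)..(t - T), h s) atTop (𝓝 (l1 h)) :=
    intervalIntegral_tendsto_integral_Ioi 0 hk.2.2 (tendsto_atTop_add_const_right _ (-T) tendsto_id)
  have h3 := h1.sub h2
  rw [sub_self] at h3
  apply h3.congr'
  filter_upwards [eventually_ge_atTop T] with t ht
  have h0t : (0:ℝ) ≤ t - T := by linarith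
  rw [← intervalIntegral.integral_add_adjacent_intervals (a := (0:ℝ)) (b := t - T) (c := t)]
  · ring
  · exact kernel_intervalIntegrable hk h0t
  · have := kernel_intervalIntegrable hk (le_trans h0t (by linarith : t - T ≤ t))
    exact this.mono_set (by rw [Set.uIcc_of_le (by linarith : t - T ≤ t), Set.uIcc_of_le (by linarith : (0:ℝ) ≤ t)]; exact Set.Icc_subset_Icc (by linarith) le_rfl)

end ker

section conv
variable {h f : ℝ → ℝ}

lemma kernel_flip_intervalIntegrable (hk : KernelL1 h) {t : ℝ} (ht : 0 ≤ t) :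
    IntervalIntegrable (fun u => h (t - u)) volume 0 t := by
  have := (kernel_intervalIntegrable hk ht).comp_sub_left t
  simpa using this.symm

lemma conv_integrand_intervalIntegrable (hk : KernelL1 h) (hf : Continuous f)
    {t : ℝ} (ht : 0 ≤ t) :
    IntervalIntegrable (fun u => h (t - u) * f u) volume 0 t := by
  obtain ⟨M, hM⟩ := (isCompact_Icc (a := (0:ℝ)) (b := t)).exists_bound_of_continuousOn
    hf.continuousOn
  have hflip := kernel_flip_intervalIntegrable hk ht
  have hint : IntervalIntegrable (fun u => |M| * |h (t - u)|) volume 0 t :=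
    (hflip.abs.const_mul _)
  apply hint.mono_fun
  · exact ((hk.1.comp (measurable_const.sub measurable_id)).mul hf.measurable).aestronglyMeasurable
  · filter_upwards [ae_restrict_mem measurableSet_uIoc] with u hu
    rw [Set.uIoc_of_le ht] at hu
    have hu' : u ∈ Set.Icc 0 t := ⟨le_of_lt hu.1, hu.2⟩
    simp only [norm_mul, Real.norm_eq_abs, abs_abs]
    rw [mul_comm (|M|) _]
    have := hM u hu'
    rw [Real.norm_eq_abs] at this
    exact mul_le_mul_of_nonneg_left (this.trans (le_abs_self M)) (abs_nonneg _)

lemma convK_nonneg (hk : KernelL1 h) (hf0 : ∀ u, 0 ≤ f u) {t : ℝ} (ht : 0 ≤ t) :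
    0 ≤ convK h f t := by
  apply intervalIntegral.integral_nonneg ht
  intro u hu
  exact mul_nonneg (hk.2.1 _ (by linarith [hu.1, hu.2])) (hf0 u)

/-- pointwise bound: if `f ≤ M` on `[0,t]` then `convK h f t ≤ M * l1 h`. -/
lemma convK_le_of_bound (hk : KernelL1 h) (hf : Continuous f) (hf0 : ∀ u, 0 ≤ f u)
    {t M : ℝ} (ht : 0 ≤ t) (hM : ∀ u, u ∈ Set.Icc 0 t → f u ≤ M) :
    convK h f t ≤ M * l1 h := by
  have hM0 : 0 ≤ M := le_trans (hf0 0) (hM 0 ⟨le_rfl, ht⟩)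
  have step1 : convK h f t ≤ ∫ u in (0:ℝ)..t, M * h (t - u) := by
    apply intervalIntegral.integral_mono_on ht (conv_integrand_intervalIntegrable hk hf ht)
      ((kernel_flip_intervalIntegrable hk ht).const_mul M)
    intro u hu
    have h0 : 0 ≤ h (t - u) := hk.2.1 _ (by linarith [hu.1, hu.2])
    calc h (t - u) * f u ≤ h (t - u) * M := mul_le_mul_of_nonneg_left (hM u hu) h0
    _ = M * h (t - u) := mul_comm _ _
  have step2 : (∫ u in (0:ℝ)..t, M * h (t - u)) = M * ∫ s in (0:ℝ)..t, h s := by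
    rw [intervalIntegral.integral_const_mul, intervalIntegral.integral_comp_sub_left h t]
    simp
  calc convK h f t ≤ M * ∫ s in (0:ℝ)..t, h s := by rw [← step2]; exact step1
  _ ≤ M * l1 h := mul_le_mul_of_nonneg_left (partial_le_l1 hk ht) hM0

end conv

section convevent
variable {h f : ℝ → ℝ}

lemma conv_split (hk : KernelL1 h) (hf : Continuous f) {T t : ℝ} (hT : 0 ≤ T) (ht : T ≤ t) :
    convK h f t = (∫ u in (0:ℝ)..T, h (t - u) * f u) + ∫ u in T..t, h (t - u) * f u := by
  have h0t : (0:ℝ) ≤ t := le_trans hT ht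
  have hI := conv_integrand_intervalIntegrable hk hf h0t
  have hI1 : IntervalIntegrable (fun u => h (t - u) * f u) volume 0 T :=
    hI.mono_set (by rw [Set.uIcc_of_le hT, Set.uIcc_of_le h0t]; exact Set.Icc_subset_Icc le_rfl ht)
  have hI2 : IntervalIntegrable (fun u => h (t - u) * f u) volume T t :=
    hI.mono_set (by rw [Set.uIcc_of_le ht, Set.uIcc_of_le h0t]; exact Set.Icc_subset_Icc hT le_rfl)
  rw [intervalIntegral.integral_add_adjacent_intervals hI1 hI2]
  rfl

lemma convK_event_le (hk : KernelL1 h) (hf : Continuous f) (hf0 : ∀ u, 0 ≤ f u)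
    {M : ℝ} (hM : ∀ u, 0 ≤ u → f u ≤ M) {L T : ℝ} (hT : 0 ≤ T)
    (hL : ∀ u, T ≤ u → f u ≤ L) (hL0 : 0 ≤ L) :
    ∀ ε > 0, ∀ᶠ t in atTop, convK h f t ≤ l1 h * L + ε := by
  intro ε hε
  have hM0 : 0 ≤ M := le_trans (hf0 0) (hM 0 le_rfl)
  have htail := tail_tendsto hk T hT
  have htail2 : Tendsto (fun t => M * ∫ s in (t - T)..t, h s) atTop (𝓝 (M * 0)) :=
    htail.const_mul M
  rw [mul_zero] at htail2
  have hev := htail2.eventually_le_const (by positivity : (0:ℝ) < ε)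
  filter_upwards [hev, eventually_ge_atTop T] with t htev htT
  have h0t : (0:ℝ) ≤ t := le_trans hT htT
  rw [conv_split hk hf hT htT]
  have hI := conv_integrand_intervalIntegrable hk hf h0t
  have hI1 : IntervalIntegrable (fun u => h (t - u) * f u) volume 0 T :=
    hI.mono_set (by rw [Set.uIcc_of_le hT, Set.uIcc_of_le h0t]; exact Set.Icc_subset_Icc le_rfl htT)
  have hI2 : IntervalIntegrable (fun u => h (t - u) * f u) volume T t :=
    hI.mono_set (by rw [Set.uIcc_of_le htT, Set.uIcc_of_le h0t]; exact Set.Icc_subset_Icc hT le_rfl)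
  have hflip := kernel_flip_intervalIntegrable hk h0t
  have hflip1 : IntervalIntegrable (fun u => h (t - u)) volume 0 T :=
    hflip.mono_set (by rw [Set.uIcc_of_le hT, Set.uIcc_of_le h0t]; exact Set.Icc_subset_Icc le_rfl htT)
  have hflip2 : IntervalIntegrable (fun u => h (t - u)) volume T t :=
    hflip.mono_set (by rw [Set.uIcc_of_le htT, Set.uIcc_of_le h0t]; exact Set.Icc_subset_Icc hT le_rfl)
  have part1 : (∫ u in (0:ℝ)..T, h (t - u) * f u) ≤ M * ∫ s in (t - T)..t, h s := by
    have : (∫ u in (0:ℝ)..T, h (t - u) * f u) ≤ ∫ u in (0:ℝ)..T, M * h (t - u) := by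
      apply intervalIntegral.integral_mono_on hT hI1 (hflip1.const_mul M)
      intro u hu
      have h0 : 0 ≤ h (t - u) := hk.2.1 _ (by linarith [hu.1, hu.2])
      calc h (t - u) * f u ≤ h (t - u) * M :=
            mul_le_mul_of_nonneg_left (hM u hu.1) h0
      _ = M * h (t - u) := mul_comm _ _
    rw [intervalIntegral.integral_const_mul, intervalIntegral.integral_comp_sub_left h t] at this
    simpa using this
  have part2 : (∫ u in T..t, h (t - u) * f u) ≤ l1 h * L := by
    have s1 : (∫ u in T..t, h (t - u) * f u) ≤ ∫ u in T..t, L * h (t - u) := by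
      apply intervalIntegral.integral_mono_on htT hI2 (hflip2.const_mul L)
      intro u hu
      have h0 : 0 ≤ h (t - u) := hk.2.1 _ (by linarith [hu.1, hu.2])
      calc h (t - u) * f u ≤ h (t - u) * L :=
            mul_le_mul_of_nonneg_left (hL u hu.1) h0
      _ = L * h (t - u) := mul_comm _ _
    have s2 : (∫ u in T..t, L * h (t - u)) = L * ∫ s in (0:ℝ)..(t - T), h s := by
      rw [intervalIntegral.integral_const_mul, intervalIntegral.integral_comp_sub_left h t]
      simp
    rw [s2] at s1
    calc (∫ u in T..t, h (t - u) * f u) ≤ L * ∫ s in (0:ℝ)..(t - T), h s := s1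
    _ ≤ L * l1 h := mul_le_mul_of_nonneg_left (partial_le_l1 hk (by linarith)) hL0
    _ = l1 h * L := mul_comm _ _
  linarith

lemma convK_event_ge (hk : KernelL1 h) (hf : Continuous f) (hf0 : ∀ u, 0 ≤ f u)
    {L T : ℝ} (hT : 0 ≤ T) (hL : ∀ u, T ≤ u → L ≤ f u) (hL0 : 0 ≤ L) :
    ∀ ε > 0, ∀ᶠ t in atTop, l1 h * L - ε ≤ convK h f t := by
  intro ε hε
  have hpar : Tendsto (fun t : ℝ => L * ∫ s in (0:ℝ)..(t - T), h s) atTop (𝓝 (L * l1 h)) := by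
    exact (intervalIntegral_tendsto_integral_Ioi 0 hk.2.2
      (tendsto_atTop_add_const_right _ (-T) tendsto_id)).const_mul L
  have hev : ∀ᶠ t in atTop, l1 h * L - ε ≤ L * ∫ s in (0:ℝ)..(t - T), h s := by
    have := hpar.eventually_const_le (by linarith : l1 h * L - ε < L * l1 h)
    simpa [mul_comm] using this
  filter_upwards [hev, eventually_ge_atTop T] with t htev htT
  have h0t : (0:ℝ) ≤ t := le_trans hT htT
  rw [conv_split hk hf hT htT]
  have hI := conv_integrand_intervalIntegrable hk hf h0t
  have hI2 : IntervalIntegrable (fun u => h (t - u) * f u) volume T t :=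
    hI.mono_set (by rw [Set.uIcc_of_le htT, Set.uIcc_of_le h0t]; exact Set.Icc_subset_Icc hT le_rfl)
  have hflip := kernel_flip_intervalIntegrable hk h0t
  have hflip2 : IntervalIntegrable (fun u => h (t - u)) volume T t :=
    hflip.mono_set (by rw [Set.uIcc_of_le htT, Set.uIcc_of_le h0t]; exact Set.Icc_subset_Icc hT le_rfl)
  have part0 : 0 ≤ ∫ u in (0:ℝ)..T, h (t - u) * f u := by
    apply intervalIntegral.integral_nonneg hT
    intro u hu
    exact mul_nonneg (hk.2.1 _ (by linarith [hu.1, hu.2])) (hf0 u)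
  have part2 : L * (∫ s in (0:ℝ)..(t - T), h s) ≤ ∫ u in T..t, h (t - u) * f u := by
    have s1 : (∫ u in T..t, L * h (t - u)) ≤ ∫ u in T..t, h (t - u) * f u := by
      apply intervalIntegral.integral_mono_on htT (hflip2.const_mul L) hI2
      intro u hu
      have h0 : 0 ≤ h (t - u) := hk.2.1 _ (by linarith [hu.1, hu.2])
      calc L * h (t - u) = h (t - u) * L := mul_comm _ _
      _ ≤ h (t - u) * f u := mul_le_mul_of_nonneg_left (hL u hu.1) h0
    have s2 : (∫ u in T..t, L * h (t - u)) = L * ∫ s in (0:ℝ)..(t - T), h s := by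
      rw [intervalIntegral.integral_const_mul, intervalIntegral.integral_comp_sub_left h t]
      simp
    rw [← s2]; exact s1
  linarith

end convevent

section fixedpoint

lemma exp_neg_diff_le {u v m : ℝ} (hmu : m ≤ u) (hmv : m ≤ v) :
    |Real.exp (-u) - Real.exp (-v)| ≤ Real.exp (-m) * |u - v| := by
  have key : ∀ u v : ℝ, m ≤ u → m ≤ v → u ≤ v →
      Real.exp (-u) - Real.exp (-v) ≤ Real.exp (-m) * (v - u) := by
    intro u v hmu hmv huv
    have h1 : Real.exp (-v) = Real.exp (-u) * Real.exp (-(v - u)) := by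
      rw [← Real.exp_add]; ring_nf
    have h2 : 1 - Real.exp (-(v - u)) ≤ v - u := by
      have := Real.add_one_le_exp (-(v - u)); linarith
    have h3 : Real.exp (-u) - Real.exp (-v) = Real.exp (-u) * (1 - Real.exp (-(v - u))) := by
      rw [h1]; ring
    rw [h3]
    calc Real.exp (-u) * (1 - Real.exp (-(v - u)))
        ≤ Real.exp (-u) * (v - u) := by
          apply mul_le_mul_of_nonneg_left h2 (Real.exp_pos _).le
    _ ≤ Real.exp (-m) * (v - u) := by
          apply mul_le_mul_of_nonneg_right (Real.exp_le_exp.mpr (by linarith)) (by linarith)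
  rcases le_total u v with huv | hvu
  · have h0 : Real.exp (-v) ≤ Real.exp (-u) := Real.exp_le_exp.mpr (by linarith)
    rw [abs_of_nonneg (by linarith), abs_of_nonpos (by linarith : u - v ≤ 0)]
    have := key u v hmu hmv huv; linarith
  · have h0 : Real.exp (-u) ≤ Real.exp (-v) := Real.exp_le_exp.mpr (by linarith)
    rw [abs_of_nonpos (by linarith : Real.exp (-u) - Real.exp (-v) ≤ 0),
      abs_of_nonneg (by linarith : 0 ≤ u - v)]
    have := key v u hmv hmu hvu; linarith

end fixedpoint

noncomputable def PhiE (κ₁ κ₂ a b μA τ : ℝ) (x : ℝ) : ℝ :=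
  a / κ₂ + b * μA * Real.exp (-(τ * (κ₂ * x))) /
    (κ₂ * (1 - κ₁ * Real.exp (-(τ * (κ₂ * x)))))

section Phi
variable {κ₁ κ₂ a b μA τ : ℝ}
  (hk1 : 0 ≤ κ₁) (hk2 : 0 < κ₂) (ha0 : 0 ≤ a) (hb : 0 < b) (hμA : 0 < μA) (hτ : 0 < τ)
  (hcrit : κ₁ * Real.exp (-(τ * a)) < 1)

include hk2 ha0 hτ in
lemma Y_le {x : ℝ} (hx : a / κ₂ ≤ x) :
    Real.exp (-(τ * (κ₂ * x))) ≤ Real.exp (-(τ * a)) := by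
  apply Real.exp_le_exp.mpr
  have : a ≤ κ₂ * x := by rw [div_le_iff₀ hk2] at hx; linarith [hx]
  nlinarith

include hk1 hk2 ha0 hτ hcrit in
lemma D_pos {x : ℝ} (hx : a / κ₂ ≤ x) :
    0 < 1 - κ₁ * Real.exp (-(τ * (κ₂ * x))) := by
  have h1 := Y_le hk2 ha0 hτ hx
  nlinarith

include hk1 hk2 ha0 hb hμA hτ hcrit in
lemma PhiE_lip {x y : ℝ} (hx : a / κ₂ ≤ x) (hy : a / κ₂ ≤ y) :
    |PhiE κ₁ κ₂ a b μA τ x - PhiE κ₁ κ₂ a b μA τ y| ≤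
      b * μA * τ * Real.exp (-(τ * a)) / (1 - κ₁ * Real.exp (-(τ * a))) ^ 2 * |x - y| := by
  set E := Real.exp (-(τ * a)) with hE
  set Yx := Real.exp (-(τ * (κ₂ * x))) with hYx
  set Yy := Real.exp (-(τ * (κ₂ * y))) with hYy
  set Dx := 1 - κ₁ * Yx with hDx
  set Dy := 1 - κ₁ * Yy with hDy
  set d := 1 - κ₁ * E with hd
  have hdpos : 0 < d := by linarith
  have hDxpos : 0 < Dx := D_pos hk1 hk2 ha0 hτ hcrit hx
  have hDypos : 0 < Dy := D_pos hk1 hk2 ha0 hτ hcrit hy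
  have hYxE : Yx ≤ E := Y_le hk2 ha0 hτ hx
  have hYyE : Yy ≤ E := Y_le hk2 ha0 hτ hy
  have hdDx : d ≤ Dx := by
    have := mul_le_mul_of_nonneg_left hYxE hk1; rw [hDx, hd]; linarith
  have hdDy : d ≤ Dy := by
    have := mul_le_mul_of_nonneg_left hYyE hk1; rw [hDy, hd]; linarith
  have hdiff : PhiE κ₁ κ₂ a b μA τ x - PhiE κ₁ κ₂ a b μA τ y =
      b * μA / κ₂ * ((Yx - Yy) / (Dx * Dy)) := by
    unfold PhiE
    rw [← hYx, ← hYy, ← hDx, ← hDy]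
    field_simp
    ring
  have habs : |PhiE κ₁ κ₂ a b μA τ x - PhiE κ₁ κ₂ a b μA τ y| =
      b * μA / κ₂ * (|Yx - Yy| / (Dx * Dy)) := by
    rw [hdiff, abs_mul, abs_of_pos (show (0:ℝ) < b * μA / κ₂ by positivity), abs_div,
      abs_of_pos (show (0:ℝ) < Dx * Dy by positivity)]
  have hYdiff : |Yx - Yy| ≤ E * (τ * κ₂ * |x - y|) := by
    have hm1 : τ * a ≤ τ * (κ₂ * x) := by
      have : a ≤ κ₂ * x := by rw [div_le_iff₀ hk2] at hx; linarith
      nlinarith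
    have hm2 : τ * a ≤ τ * (κ₂ * y) := by
      have : a ≤ κ₂ * y := by rw [div_le_iff₀ hk2] at hy; linarith
      nlinarith
    have := exp_neg_diff_le hm1 hm2
    rw [← hE, ← hYx, ← hYy] at this
    calc |Yx - Yy| ≤ E * |τ * (κ₂ * x) - τ * (κ₂ * y)| := this
    _ = E * (τ * κ₂ * |x - y|) := by
        congr 1
        rw [show τ * (κ₂ * x) - τ * (κ₂ * y) = τ * κ₂ * (x - y) by ring, abs_mul,
          abs_of_pos (by positivity : (0:ℝ) < τ * κ₂)]
  rw [habs]
  have step : b * μA / κ₂ * (|Yx - Yy| / (Dx * Dy)) ≤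
      b * μA / κ₂ * (E * (τ * κ₂ * |x - y|) / (d * d)) := by
    gcongr
    all_goals first | positivity | exact mul_le_mul hdDx hdDy hdpos.le hDxpos.le
  calc b * μA / κ₂ * (|Yx - Yy| / (Dx * Dy)) ≤
      b * μA / κ₂ * (E * (τ * κ₂ * |x - y|) / (d * d)) := step
  _ = b * μA * τ * E / d ^ 2 * |x - y| := by field_simp

include hk1 hk2 ha0 hb hμA hτ hcrit in
lemma PhiE_maps {x : ℝ} (hx : a / κ₂ ≤ x) :
    a / κ₂ ≤ PhiE κ₁ κ₂ a b μA τ x ∧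
    PhiE κ₁ κ₂ a b μA τ x ≤ a / κ₂ + b * μA * Real.exp (-(τ * a)) /
      (κ₂ * (1 - κ₁ * Real.exp (-(τ * a)))) := by
  have hDpos := D_pos hk1 hk2 ha0 hτ hcrit hx
  have hYE := Y_le hk2 ha0 hτ hx
  have hdpos : 0 < 1 - κ₁ * Real.exp (-(τ * a)) := by linarith
  constructor
  · unfold PhiE
    have : 0 ≤ b * μA * Real.exp (-(τ * (κ₂ * x))) /
        (κ₂ * (1 - κ₁ * Real.exp (-(τ * (κ₂ * x))))) := by positivity
    linarith
  · unfold PhiE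
    have hdDx : 1 - κ₁ * Real.exp (-(τ * a)) ≤ 1 - κ₁ * Real.exp (-(τ * (κ₂ * x))) := by
      have := mul_le_mul_of_nonneg_left hYE hk1; linarith
    have : b * μA * Real.exp (-(τ * (κ₂ * x))) /
        (κ₂ * (1 - κ₁ * Real.exp (-(τ * (κ₂ * x))))) ≤
        b * μA * Real.exp (-(τ * a)) / (κ₂ * (1 - κ₁ * Real.exp (-(τ * a)))) := by
      gcongr
      all_goals first | positivity | exact hdDx | exact hYE | linarith
    linarith

include hk1 hk2 ha0 hb hμA hτ hcrit in
lemma PhiE_exists : ∃ ℓ, a / κ₂ ≤ ℓ ∧ PhiE κ₁ κ₂ a b μA τ ℓ = ℓ := by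
  set c := a / κ₂ with hc
  set C := a / κ₂ + b * μA * Real.exp (-(τ * a)) /
      (κ₂ * (1 - κ₁ * Real.exp (-(τ * a)))) with hC
  have hdpos : 0 < 1 - κ₁ * Real.exp (-(τ * a)) := by linarith
  have hcC : c ≤ C := by
    rw [hc, hC]
    have : 0 ≤ b * μA * Real.exp (-(τ * a)) /
        (κ₂ * (1 - κ₁ * Real.exp (-(τ * a)))) := by positivity
    linarith
  have hcont : ContinuousOn (fun x => PhiE κ₁ κ₂ a b μA τ x - x) (Icc c C) := by
    apply ContinuousOn.sub _ continuousOn_id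
    unfold PhiE
    apply ContinuousOn.add continuousOn_const
    apply ContinuousOn.div
    · fun_prop
    · fun_prop
    · intro x hx
      have := D_pos hk1 hk2 ha0 hτ hcrit (hc ▸ hx.1)
      positivity
  have hgc : 0 ≤ PhiE κ₁ κ₂ a b μA τ c - c :=
    sub_nonneg.mpr ((PhiE_maps hk1 hk2 ha0 hb hμA hτ hcrit (le_refl c)).1)
  have hgC : PhiE κ₁ κ₂ a b μA τ C - C ≤ 0 :=
    sub_nonpos.mpr ((PhiE_maps hk1 hk2 ha0 hb hμA hτ hcrit hcC).2)
  have := intermediate_value_Icc' hcC hcont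
  have h0 : (0:ℝ) ∈ Icc (PhiE κ₁ κ₂ a b μA τ C - C) (PhiE κ₁ κ₂ a b μA τ c - c) := ⟨hgC, hgc⟩
  obtain ⟨ℓ, hℓmem, hℓ⟩ := this h0
  exact ⟨ℓ, hℓmem.1, by linarith [sub_eq_zero.mp hℓ]⟩

include hk1 hk2 ha0 hb hμA hτ hcrit in
lemma PhiE_unique
    (hr : b * μA * τ * Real.exp (-(τ * a)) / (1 - κ₁ * Real.exp (-(τ * a))) ^ 2 < 1)
    {x y : ℝ} (hx : a / κ₂ ≤ x) (hy : a / κ₂ ≤ y)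
    (hfx : PhiE κ₁ κ₂ a b μA τ x = x) (hfy : PhiE κ₁ κ₂ a b μA τ y = y) : x = y := by
  have := PhiE_lip hk1 hk2 ha0 hb hμA hτ hcrit hx hy
  rw [hfx, hfy] at this
  set r := b * μA * τ * Real.exp (-(τ * a)) / (1 - κ₁ * Real.exp (-(τ * a))) ^ 2 with hrdef
  have hr0 : 0 ≤ r := by
    have hdpos : 0 < 1 - κ₁ * Real.exp (-(τ * a)) := by linarith
    positivity
  have : |x - y| ≤ 0 := by nlinarith [abs_nonneg (x - y)]
  have := abs_nonneg (x - y)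
  have hxy : |x - y| = 0 := le_antisymm ‹|x - y| ≤ 0› this
  have := abs_eq_zero.mp hxy
  linarith

end Phi



section sys

lemma lB_event_lower
    {α μB κ₃ : ℝ} {h₃ lB : ℝ → ℝ} (hα : α ∈ Set.Ioo (0:ℝ) 1) (hh₃ : KernelL1 h₃)
    (hκ₃ : κ₃ = (1 - α) * l1 h₃) (hk3 : κ₃ < 1) (hμB : 0 ≤ μB)
    (hcB : Continuous lB) (hB0 : ∀ t, 0 ≤ lB t)
    (hge : ∀ t, 0 ≤ t → μB + (1 - α) * convK h₃ lB t ≤ lB t) :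
    ∀ δ > 0, ∀ᶠ t in atTop, μB / (1 - κ₃) - δ ≤ lB t := by
  have hα1 : 0 < 1 - α := by linarith [hα.2]
  have hα1' : 1 - α ≤ 1 := by linarith [hα.1]
  have hk30 : 0 ≤ κ₃ := by rw [hκ₃]; exact mul_nonneg hα1.le (l1_nonneg hh₃)
  set m := μB / (1 - κ₃) with hm
  have hm0 : 0 ≤ m := div_nonneg hμB (by linarith)
  have hne : (1:ℝ) - κ₃ ≠ 0 := by linarith
  have hmB : (1 - κ₃) * m = μB := by rw [hm]; field_simp
  have claim : ∀ n : ℕ, ∀ δ > 0, ∀ᶠ t in atTop, (1 - κ₃ ^ n) * m - δ ≤ lB t := by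
    intro n
    induction n with
    | zero =>
      intro δ hδ
      filter_upwards with t
      have := hB0 t
      simp only [pow_zero]
      linarith
    | succ n ih =>
      intro δ hδ
      obtain ⟨T₀, hT₀⟩ := eventually_atTop.mp (ih (δ/2) (by linarith))
      set T := max T₀ 0 with hT
      set L := max 0 ((1 - κ₃ ^ n) * m - δ/2) with hL
      have hLle : ∀ u, T ≤ u → L ≤ lB u := fun u hu =>
        max_le (hB0 u) (hT₀ u (le_trans (le_max_left _ _) hu))
      have hconv := convK_event_ge hh₃ hcB hB0 (le_max_right T₀ 0) hLle
        (le_max_left _ _) (δ/2) (by linarith)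
      filter_upwards [hconv, eventually_ge_atTop 0] with t hc ht0
      have h1 := hge t ht0
      have h2 : (1 - α) * (l1 h₃ * L - δ/2) ≤ (1 - α) * convK h₃ lB t :=
        mul_le_mul_of_nonneg_left hc hα1.le
      have h3 : (1 - α) * (l1 h₃ * L - δ/2) = κ₃ * L - (1 - α) * (δ/2) := by
        rw [hκ₃]; ring
      have hLge : (1 - κ₃ ^ n) * m - δ/2 ≤ L := le_max_right _ _
      have h4 : κ₃ * ((1 - κ₃ ^ n) * m - δ/2) ≤ κ₃ * L :=
        mul_le_mul_of_nonneg_left hLge hk30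
      have h5 : (1 - α) * (δ/2) ≤ δ/2 := by nlinarith
      have h6 : κ₃ * (δ/2) ≤ δ/2 := by nlinarith
      have hps : κ₃ ^ (n+1) = κ₃ * κ₃ ^ n := by ring
      nlinarith [h1, h2, h3, h4, hmB]
  intro δ hδ
  have htend : Tendsto (fun n : ℕ => κ₃ ^ n * m) atTop (𝓝 0) := by
    have := (tendsto_pow_atTop_nhds_zero_of_lt_one hk30 hk3).mul_const m
    simpa using this
  obtain ⟨n, hn⟩ := (htend.eventually_le_const (by linarith : (0:ℝ) < δ/2)).exists
  filter_upwards [claim n (δ/2) (by linarith)] with t ht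
  nlinarith [ht]

end sys


set_option maxHeartbeats 2000000 in
lemma sys_bounds
    {α : ℝ} (hα : α ∈ Set.Ioo (0:ℝ) 1)
    {h₁ h₂ h₃ h₄ : ℝ → ℝ}
    (hh₁ : KernelL1 h₁) (hh₂ : KernelL1 h₂) (hh₃ : KernelL1 h₃) (hh₄ : KernelL1 h₄)
    {κ₁ κ₂ κ₃ κ₄ : ℝ}
    (hκ₁ : κ₁ = α * l1 h₁) (hκ₂ : κ₂ = (1 - α) * l1 h₂)
    (hκ₃ : κ₃ = (1 - α) * l1 h₃) (hκ₄ : κ₄ = α * l1 h₄)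
    {μA μB : ℝ} (hμA : 0 < μA) (hμB : 0 ≤ μB)
    {τ : ℝ} (hτ : 0 < τ)
    {a b : ℝ} (ha : a = μB * κ₂ / (1 - κ₃)) (hb : b = κ₂ * κ₄ / (1 - κ₃))
    (hk2 : 0 < κ₂) (hk4 : 0 < κ₄) (hk3 : κ₃ < 1)
    (hcrit : κ₁ * Real.exp (-(τ * a)) < 1)
    {lA lB : ℝ → ℝ}
    (hsys : IsLinSys α h₁ h₂ h₃ h₄ (fun x => Real.exp (-(τ * x))) (fun x => x) μA μB lA lB) :
    ∃ MA MB : ℝ, 0 ≤ MA ∧ 0 ≤ MB ∧ (∀ t, 0 ≤ t → lA t ≤ MA) ∧ (∀ t, 0 ≤ t → lB t ≤ MB) := by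
  obtain ⟨hcA, hcB, hA0, hB0, heqA, heqB⟩ := hsys
  simp only at heqA heqB
  obtain ⟨hα0, hα1⟩ := hα
  have h1α : 0 < 1 - α := by linarith
  have hκ₁0 : 0 ≤ κ₁ := by rw [hκ₁]; exact mul_nonneg hα0.le (l1_nonneg hh₁)
  have hκ₃0 : 0 ≤ κ₃ := by rw [hκ₃]; exact mul_nonneg h1α.le (l1_nonneg hh₃)
  have h1k3 : 0 < 1 - κ₃ := by linarith
  have ha0 : 0 ≤ a := by rw [ha]; positivity
  have hb0 : 0 < b := by rw [hb]; positivity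
  have hmm : μB / (1 - κ₃) = a / κ₂ := by rw [ha]; field_simp
  -- Step A : eventual lower bound for lB
  have hlow : ∀ δ > 0, ∀ᶠ t in atTop, a / κ₂ - δ ≤ lB t := by
    intro δ hδ
    have hge : ∀ t, 0 ≤ t → μB + (1 - α) * convK h₃ lB t ≤ lB t := by
      intro t ht
      have h4 : 0 ≤ α * convK h₄ lA t := mul_nonneg hα0.le (convK_nonneg hh₄ hA0 ht)
      rw [heqB t ht]; linarith
    have := lB_event_lower ⟨hα0, hα1⟩ hh₃ hκ₃ hk3 hμB hcB hB0 hge δ hδ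
    rw [hmm] at this; exact this
  -- Step B : choice of ρ
  have hctsε : Continuous (fun ε : ℝ => κ₁ * Real.exp (-(τ * (a - ε)))) := by fun_prop
  have hev : ∀ᶠ ε in 𝓝 (0:ℝ), κ₁ * Real.exp (-(τ * (a - ε))) < 1 := by
    have := hctsε.continuousAt (x := 0)
    exact this.eventually_lt continuousAt_const (by simpa using hcrit)
  have hev2 : ∀ᶠ ε in 𝓝[>] (0:ℝ), κ₁ * Real.exp (-(τ * (a - ε))) < 1 ∧ ε ∈ Set.Ioi (0:ℝ) :=
    (hev.filter_mono nhdsWithin_le_nhds).and eventually_mem_nhdsWithin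
  obtain ⟨ε₀, hρ1, hε₀⟩ := hev2.exists
  rw [Set.mem_Ioi] at hε₀
  set ρ := Real.exp (-(τ * (a - ε₀))) with hρdef
  have hρ0 : 0 < ρ := Real.exp_pos _
  -- Step C : eventually the inhibition factor is ≤ ρ
  have hconvlow : ∀ᶠ t in atTop, a - ε₀ ≤ (1 - α) * convK h₂ lB t := by
    obtain ⟨T₀, hT₀⟩ := eventually_atTop.mp (hlow (ε₀ / (2 * κ₂)) (by positivity))
    set T := max T₀ 0 with hTdef
    set L := max 0 (a / κ₂ - ε₀ / (2 * κ₂)) with hLdef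
    have hLle : ∀ u, T ≤ u → L ≤ lB u := fun u hu =>
      max_le (hB0 u) (hT₀ u (le_trans (le_max_left _ _) hu))
    have hconv := convK_event_ge hh₂ hcB hB0 (le_max_right T₀ 0) hLle
      (le_max_left _ _) (ε₀ / 2) (by positivity)
    filter_upwards [hconv] with t hc
    have h2 : (1 - α) * (l1 h₂ * L - ε₀ / 2) ≤ (1 - α) * convK h₂ lB t :=
      mul_le_mul_of_nonneg_left hc h1α.le
    have hLge : a / κ₂ - ε₀ / (2 * κ₂) ≤ L := le_max_right _ _
    have hl1 : (1 - α) * l1 h₂ = κ₂ := hκ₂.symm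
    have e1 : (1 - α) * (l1 h₂ * L - ε₀ / 2) = κ₂ * L - (1 - α) * (ε₀ / 2) := by
      rw [← hl1]; ring
    have e2 : κ₂ * (a / κ₂ - ε₀ / (2 * κ₂)) = a - ε₀ / 2 := by field_simp
    have e3 : κ₂ * (a / κ₂ - ε₀ / (2 * κ₂)) ≤ κ₂ * L := mul_le_mul_of_nonneg_left hLge hk2.le
    have e4 : (1 - α) * (ε₀ / 2) ≤ ε₀ / 2 := by nlinarith
    linarith
  have hexp : ∀ᶠ t in atTop, Real.exp (-(τ * ((1 - α) * convK h₂ lB t))) ≤ ρ := by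
    filter_upwards [hconvlow] with t hc
    apply Real.exp_le_exp.mpr
    nlinarith
  -- Step D : lA is bounded
  obtain ⟨T₁, hT₁⟩ := eventually_atTop.mp hexp
  set T₁' := max T₁ 0 with hT₁'def
  obtain ⟨C₀, hC₀⟩ := (isCompact_Icc (a := (0:ℝ)) (b := T₁')).exists_bound_of_continuousOn
    hcA.continuousOn
  have hρκ : ρ * κ₁ < 1 := by rwa [mul_comm]
  set MA := max C₀ (ρ * μA / (1 - ρ * κ₁)) with hMAdef
  have hMA : ∀ t, 0 ≤ t → lA t ≤ MA := by
    intro t ht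
    obtain ⟨t₀, ht₀mem, ht₀max⟩ := (isCompact_Icc (a := (0:ℝ)) (b := t)).exists_isMaxOn
      ⟨0, Set.left_mem_Icc.mpr ht⟩ hcA.continuousOn
    have htle : lA t ≤ lA t₀ := ht₀max (Set.right_mem_Icc.mpr ht)
    by_cases hcase : t₀ ≤ T₁'
    · have := hC₀ t₀ ⟨ht₀mem.1, hcase⟩
      have h1 : lA t₀ ≤ C₀ := le_trans (le_abs_self _) (by rwa [Real.norm_eq_abs] at this)
      exact le_trans htle (le_trans h1 (le_max_left _ _))
    · push_neg at hcase
      have hρt := hT₁ t₀ (le_trans (le_max_left _ _) hcase.le)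
      have heq := heqA t₀ ht₀mem.1
      have hconv1 : convK h₁ lA t₀ ≤ lA t₀ * l1 h₁ := by
        have := convK_le_of_bound hh₁ hcA hA0 ht₀mem.1 (M := lA t₀)
          (fun u hu => ht₀max ⟨hu.1, le_trans hu.2 ht₀mem.2⟩)
        linarith [this]
      have hP0 : 0 ≤ μA + α * convK h₁ lA t₀ := by
        have := convK_nonneg hh₁ hA0 ht₀mem.1; positivity
      have hQ0 : 0 ≤ μA + κ₁ * lA t₀ := by
        have := hA0 t₀; positivity
      have hPQ : μA + α * convK h₁ lA t₀ ≤ μA + κ₁ * lA t₀ := by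
        have := mul_le_mul_of_nonneg_left hconv1 hα0.le
        rw [hκ₁]; nlinarith
      have hE0 : 0 ≤ Real.exp (-(τ * ((1 - α) * convK h₂ lB t₀))) := (Real.exp_pos _).le
      have hkey : lA t₀ ≤ (μA + κ₁ * lA t₀) * ρ :=
        calc lA t₀ = (μA + α * convK h₁ lA t₀) *
              Real.exp (-(τ * ((1 - α) * convK h₂ lB t₀))) := heq
        _ ≤ (μA + κ₁ * lA t₀) * ρ := mul_le_mul hPQ hρt hE0 hQ0
      have h2 : lA t₀ ≤ ρ * μA / (1 - ρ * κ₁) := by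
        rw [le_div_iff₀ (by linarith)]; nlinarith
      exact le_trans htle (le_trans h2 (le_max_right _ _))
  have hMA0 : 0 ≤ MA := le_trans (hA0 0) (hMA 0 le_rfl)
  -- Step E : lB is bounded
  set MB := (μB + κ₄ * MA) / (1 - κ₃) with hMBdef
  have hMB : ∀ t, 0 ≤ t → lB t ≤ MB := by
    intro t ht
    obtain ⟨t₀, ht₀mem, ht₀max⟩ := (isCompact_Icc (a := (0:ℝ)) (b := t)).exists_isMaxOn
      ⟨0, Set.left_mem_Icc.mpr ht⟩ hcB.continuousOn
    have htle : lB t ≤ lB t₀ := ht₀max (Set.right_mem_Icc.mpr ht)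
    have heq := heqB t₀ ht₀mem.1
    have hconv3 : convK h₃ lB t₀ ≤ lB t₀ * l1 h₃ := by
      have := convK_le_of_bound hh₃ hcB hB0 ht₀mem.1 (M := lB t₀)
        (fun u hu => ht₀max ⟨hu.1, le_trans hu.2 ht₀mem.2⟩)
      linarith [this]
    have hconv4 : convK h₄ lA t₀ ≤ MA * l1 h₄ := by
      exact convK_le_of_bound hh₄ hcA hA0 ht₀mem.1 (M := MA) (fun u hu => hMA u hu.1)
    have hkey : lB t₀ ≤ μB + κ₃ * lB t₀ + κ₄ * MA := by
      rw [heq, hκ₃, hκ₄]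
      nlinarith [mul_le_mul_of_nonneg_left hconv3 h1α.le,
        mul_le_mul_of_nonneg_left hconv4 hα0.le]
    have h2 : lB t₀ ≤ MB := by
      rw [hMBdef, le_div_iff₀ h1k3]; nlinarith
    exact le_trans htle h2
  have hMB0 : 0 ≤ MB := le_trans (hB0 0) (hMB 0 le_rfl)
  exact ⟨MA, MB, hMA0, hMB0, hMA, hMB⟩


set_option maxHeartbeats 4000000 in
lemma sys_main
    {α : ℝ} (hα : α ∈ Set.Ioo (0:ℝ) 1)
    {h₁ h₂ h₃ h₄ : ℝ → ℝ}
    (hh₁ : KernelL1 h₁) (hh₂ : KernelL1 h₂) (hh₃ : KernelL1 h₃) (hh₄ : KernelL1 h₄)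
    {κ₁ κ₂ κ₃ κ₄ : ℝ}
    (hκ₁ : κ₁ = α * l1 h₁) (hκ₂ : κ₂ = (1 - α) * l1 h₂)
    (hκ₃ : κ₃ = (1 - α) * l1 h₃) (hκ₄ : κ₄ = α * l1 h₄)
    {μA μB : ℝ} (hμA : 0 < μA) (hμB : 0 ≤ μB)
    {τ : ℝ} (hτ : 0 < τ)
    {a b : ℝ} (ha : a = μB * κ₂ / (1 - κ₃)) (hb : b = κ₂ * κ₄ / (1 - κ₃))
    (hk2 : 0 < κ₂) (hk4 : 0 < κ₄) (hk3 : κ₃ < 1)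
    (hcrit : κ₁ * Real.exp (-(τ * a)) < 1)
    (hr : b * μA * τ * Real.exp (-(τ * a)) / (1 - κ₁ * Real.exp (-(τ * a))) ^ 2 < 1)
    {ℓ : ℝ} (hℓc : a / κ₂ ≤ ℓ) (hℓfix : PhiE κ₁ κ₂ a b μA τ ℓ = ℓ)
    {lA lB : ℝ → ℝ}
    (hsys : IsLinSys α h₁ h₂ h₃ h₄ (fun x => Real.exp (-(τ * x))) (fun x => x) μA μB lA lB) :
    Tendsto lB atTop (𝓝 ℓ) ∧
    Tendsto lA atTop
      (𝓝 (μA * Real.exp (-(τ * (κ₂ * ℓ))) / (1 - κ₁ * Real.exp (-(τ * (κ₂ * ℓ)))))) := by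
  obtain ⟨MA, MB, hMA0, hMB0, hMA, hMB⟩ := sys_bounds hα hh₁ hh₂ hh₃ hh₄ hκ₁ hκ₂ hκ₃ hκ₄
    hμA hμB hτ ha hb hk2 hk4 hk3 hcrit hsys
  obtain ⟨hcA, hcB, hA0, hB0, heqA, heqB⟩ := hsys
  simp only at heqA heqB
  obtain ⟨hα0, hα1⟩ := hα
  have h1α : 0 < 1 - α := by linarith
  have hκ₁0 : 0 ≤ κ₁ := by rw [hκ₁]; exact mul_nonneg hα0.le (l1_nonneg hh₁)
  have hκ₃0 : 0 ≤ κ₃ := by rw [hκ₃]; exact mul_nonneg h1α.le (l1_nonneg hh₃)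
  have h1k3 : 0 < 1 - κ₃ := by linarith
  have ha0 : 0 ≤ a := by rw [ha]; positivity
  have hb0 : 0 < b := by rw [hb]; positivity
  have hmm : μB / (1 - κ₃) = a / κ₂ := by rw [ha]; field_simp
  have hlow : ∀ δ > 0, ∀ᶠ t in atTop, a / κ₂ - δ ≤ lB t := by
    intro δ hδ
    have hge : ∀ t, 0 ≤ t → μB + (1 - α) * convK h₃ lB t ≤ lB t := by
      intro t ht
      have h4 : 0 ≤ α * convK h₄ lA t := mul_nonneg hα0.le (convK_nonneg hh₄ hA0 ht)
      rw [heqB t ht]; linarith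
    have := lB_event_lower ⟨hα0, hα1⟩ hh₃ hκ₃ hk3 hμB hcB hB0 hge δ hδ
    rw [hmm] at this; exact this
  -- limsup / liminf setup
  set sA := limsup lA atTop with hsAdef
  set iA := liminf lA atTop with hiAdef
  set sB := limsup lB atTop with hsBdef
  set iB := liminf lB atTop with hiBdef
  have hbA_le : IsBoundedUnder (· ≤ ·) atTop lA :=
    ⟨MA, eventually_map.mpr (by filter_upwards [eventually_ge_atTop 0] with t ht using hMA t ht)⟩
  have hbA_ge : IsBoundedUnder (· ≥ ·) atTop lA :=
    ⟨0, eventually_map.mpr (Eventually.of_forall hA0)⟩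
  have hbB_le : IsBoundedUnder (· ≤ ·) atTop lB :=
    ⟨MB, eventually_map.mpr (by filter_upwards [eventually_ge_atTop 0] with t ht using hMB t ht)⟩
  have hbB_ge : IsBoundedUnder (· ≥ ·) atTop lB :=
    ⟨0, eventually_map.mpr (Eventually.of_forall hB0)⟩
  have hcbA_le : IsCoboundedUnder (· ≤ ·) atTop lA := hbA_ge.isCoboundedUnder_le
  have hcbA_ge : IsCoboundedUnder (· ≥ ·) atTop lA := hbA_le.isCoboundedUnder_ge
  have hcbB_le : IsCoboundedUnder (· ≤ ·) atTop lB := hbB_ge.isCoboundedUnder_le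
  have hcbB_ge : IsCoboundedUnder (· ≥ ·) atTop lB := hbB_le.isCoboundedUnder_ge
  have hiA0 : 0 ≤ iA := le_liminf_of_le hcbA_ge (Eventually.of_forall hA0)
  have hiA_le_sA : iA ≤ sA := liminf_le_limsup hbA_le hbA_ge
  have hiB_le_sB : iB ≤ sB := liminf_le_limsup hbB_le hbB_ge
  have hsA0 : 0 ≤ sA := le_trans hiA0 hiA_le_sA
  have hiB_ge_m : a / κ₂ ≤ iB := by
    by_contra hcon
    push_neg at hcon
    have hδ : 0 < (a / κ₂ - iB) / 2 := by linarith
    have := le_liminf_of_le hcbB_ge (hlow _ hδ)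
    rw [← hiBdef] at this
    linarith
  have hsB_ge_m : a / κ₂ ≤ sB := le_trans hiB_ge_m hiB_le_sB
  have hiB0 : 0 ≤ iB := le_trans (by positivity) hiB_ge_m
  have hsB0 : 0 ≤ sB := le_trans hiB0 hiB_le_sB
  -- helper : eventual bounds in ∀-u-≥-T form
  have hformA_up : ∀ ε > 0, ∃ T, 0 ≤ T ∧ ∀ u, T ≤ u → lA u ≤ sA + ε := by
    intro ε hε
    obtain ⟨T, hT⟩ := eventually_atTop.mp
      (eventually_lt_of_limsup_lt (by rw [← hsAdef]; linarith : limsup lA atTop < sA + ε) hbA_le)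
    exact ⟨max T 0, le_max_right _ _, fun u hu => (hT u (le_trans (le_max_left _ _) hu)).le⟩
  have hformA_dn : ∀ ε > 0, ∃ T, 0 ≤ T ∧ ∀ u, T ≤ u → max 0 (iA - ε) ≤ lA u := by
    intro ε hε
    obtain ⟨T, hT⟩ := eventually_atTop.mp
      (eventually_lt_of_lt_liminf (by rw [← hiAdef]; linarith : iA - ε < liminf lA atTop) hbA_ge)
    exact ⟨max T 0, le_max_right _ _, fun u hu =>
      max_le (hA0 u) (hT u (le_trans (le_max_left _ _) hu)).le⟩
  have hformB_up : ∀ ε > 0, ∃ T, 0 ≤ T ∧ ∀ u, T ≤ u → lB u ≤ sB + ε := by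
    intro ε hε
    obtain ⟨T, hT⟩ := eventually_atTop.mp
      (eventually_lt_of_limsup_lt (by rw [← hsBdef]; linarith : limsup lB atTop < sB + ε) hbB_le)
    exact ⟨max T 0, le_max_right _ _, fun u hu => (hT u (le_trans (le_max_left _ _) hu)).le⟩
  have hformB_dn : ∀ ε > 0, ∃ T, 0 ≤ T ∧ ∀ u, T ≤ u → max 0 (iB - ε) ≤ lB u := by
    intro ε hε
    obtain ⟨T, hT⟩ := eventually_atTop.mp
      (eventually_lt_of_lt_liminf (by rw [← hiBdef]; linarith : iB - ε < liminf lB atTop) hbB_ge)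
    exact ⟨max T 0, le_max_right _ _, fun u hu =>
      max_le (hB0 u) (hT u (le_trans (le_max_left _ _) hu)).le⟩
  -- I1 : sA ≤ (μA + κ₁ sA) e^{-τ κ₂ iB}
  have I1 : sA ≤ (μA + κ₁ * sA) * Real.exp (-(τ * (κ₂ * iB))) := by
    have key : ∀ ε > 0, sA ≤ (μA + κ₁ * (sA + ε) + ε) *
        Real.exp (-(τ * (κ₂ * (iB - ε) - ε))) := by
      intro ε hε
      obtain ⟨TA, hTA0, hTA⟩ := hformA_up ε hε
      obtain ⟨TB, hTB0, hTB⟩ := hformB_dn ε hε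
      have hc1 := convK_event_le hh₁ hcA hA0 hMA hTA0 hTA (by linarith) ε hε
      have hc2 := convK_event_ge hh₂ hcB hB0 hTB0 hTB (le_max_left _ _) ε hε
      apply limsup_le_of_le hcbA_le
      filter_upwards [hc1, hc2, eventually_ge_atTop 0] with t h1t h2t ht0
      rw [heqA t ht0]
      have e1 : μA + α * convK h₁ lA t ≤ μA + κ₁ * (sA + ε) + ε := by
        have h' := mul_le_mul_of_nonneg_left h1t hα0.le
        have he : α * (l1 h₁ * (sA + ε) + ε) = κ₁ * (sA + ε) + α * ε := by rw [hκ₁]; ring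
        have hαε : α * ε ≤ ε := by
          have := mul_le_mul_of_nonneg_right hα1.le hε.le; linarith only [this]
        linarith only [h', he, hαε]
      have e2 : Real.exp (-(τ * ((1 - α) * convK h₂ lB t))) ≤
          Real.exp (-(τ * (κ₂ * (iB - ε) - ε))) := by
        apply Real.exp_le_exp.mpr
        have hX : κ₂ * (iB - ε) - ε ≤ (1 - α) * convK h₂ lB t := by
          have h' := mul_le_mul_of_nonneg_left h2t h1α.le
          have he : (1 - α) * (l1 h₂ * max 0 (iB - ε) - ε) =
              κ₂ * max 0 (iB - ε) - (1 - α) * ε := by rw [hκ₂]; ring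
          have hmax := mul_le_mul_of_nonneg_left (le_max_right 0 (iB - ε)) hk2.le
          have hαε2 : (1 - α) * ε ≤ ε := by
            have := mul_le_mul_of_nonneg_right (by linarith only [hα0] : 1 - α ≤ 1) hε.le
            linarith only [this]
          linarith only [h', he, hmax, hαε2]
        have := mul_le_mul_of_nonneg_left hX hτ.le
        linarith only [this]
      have hQ0 : 0 ≤ μA + κ₁ * (sA + ε) + ε := by positivity
      have hP0 : 0 ≤ μA + α * convK h₁ lA t := by
        have := convK_nonneg hh₁ hA0 ht0; positivity
      exact mul_le_mul e1 e2 (Real.exp_pos _).le hQ0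
    have hlim : Tendsto (fun ε : ℝ => (μA + κ₁ * (sA + ε) + ε) *
        Real.exp (-(τ * (κ₂ * (iB - ε) - ε)))) (𝓝[>] 0)
        (𝓝 ((μA + κ₁ * sA) * Real.exp (-(τ * (κ₂ * iB))))) := by
      have hcont : Continuous (fun ε : ℝ => (μA + κ₁ * (sA + ε) + ε) *
          Real.exp (-(τ * (κ₂ * (iB - ε) - ε)))) := by fun_prop
      have := (hcont.tendsto 0).mono_left (nhdsWithin_le_nhds (s := Set.Ioi (0:ℝ)))
      simpa using this
    exact ge_of_tendsto hlim (eventually_mem_nhdsWithin.mono fun ε hε => key ε hε)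
  -- I2 : (μA + κ₁ iA) e^{-τ κ₂ sB} ≤ iA
  have I2 : (μA + κ₁ * iA) * Real.exp (-(τ * (κ₂ * sB))) ≤ iA := by
    have key : ∀ ε > 0, (μA + κ₁ * (iA - ε) - ε) *
        Real.exp (-(τ * (κ₂ * (sB + ε) + ε))) ≤ iA := by
      intro ε hε
      obtain ⟨TA, hTA0, hTA⟩ := hformA_dn ε hε
      obtain ⟨TB, hTB0, hTB⟩ := hformB_up ε hε
      have hc1 := convK_event_ge hh₁ hcA hA0 hTA0 hTA (le_max_left _ _) ε hε
      have hc2 := convK_event_le hh₂ hcB hB0 hMB hTB0 hTB (by linarith) ε hε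
      apply le_liminf_of_le hcbA_ge
      filter_upwards [hc1, hc2, eventually_ge_atTop 0] with t h1t h2t ht0
      rw [heqA t ht0]
      have e1 : μA + κ₁ * (iA - ε) - ε ≤ μA + α * convK h₁ lA t := by
        have h' := mul_le_mul_of_nonneg_left h1t hα0.le
        have he : α * (l1 h₁ * max 0 (iA - ε) - ε) = κ₁ * max 0 (iA - ε) - α * ε := by
          rw [hκ₁]; ring
        have hmax := mul_le_mul_of_nonneg_left (le_max_right 0 (iA - ε)) hκ₁0
        have hαε : α * ε ≤ ε := by
          have := mul_le_mul_of_nonneg_right hα1.le hε.le; linarith only [this]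
        linarith only [h', he, hmax, hαε]
      have e2 : Real.exp (-(τ * (κ₂ * (sB + ε) + ε))) ≤
          Real.exp (-(τ * ((1 - α) * convK h₂ lB t))) := by
        apply Real.exp_le_exp.mpr
        have hX : (1 - α) * convK h₂ lB t ≤ κ₂ * (sB + ε) + ε := by
          have h' := mul_le_mul_of_nonneg_left h2t h1α.le
          have he : (1 - α) * (l1 h₂ * (sB + ε) + ε) = κ₂ * (sB + ε) + (1 - α) * ε := by
            rw [hκ₂]; ring
          have hαε2 : (1 - α) * ε ≤ ε := by
            have := mul_le_mul_of_nonneg_right (by linarith only [hα0] : 1 - α ≤ 1) hε.le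
            linarith only [this]
          linarith only [h', he, hαε2]
        have := mul_le_mul_of_nonneg_left hX hτ.le
        linarith only [this]
      rcases le_or_gt (μA + κ₁ * (iA - ε) - ε) 0 with hp | hp
      · have hRHS : 0 ≤ (μA + α * convK h₁ lA t) *
            Real.exp (-(τ * ((1 - α) * convK h₂ lB t))) := by
          have := convK_nonneg hh₁ hA0 ht0; positivity
        have hLHS : (μA + κ₁ * (iA - ε) - ε) *
            Real.exp (-(τ * (κ₂ * (sB + ε) + ε))) ≤ 0 :=
          mul_nonpos_iff.mpr (Or.inr ⟨hp, (Real.exp_pos _).le⟩)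
        linarith only [hRHS, hLHS]
      · refine mul_le_mul e1 e2 (Real.exp_pos _).le ?_
        have hcv := convK_nonneg hh₁ hA0 ht0
        positivity
    have hlim : Tendsto (fun ε : ℝ => (μA + κ₁ * (iA - ε) - ε) *
        Real.exp (-(τ * (κ₂ * (sB + ε) + ε)))) (𝓝[>] 0)
        (𝓝 ((μA + κ₁ * iA) * Real.exp (-(τ * (κ₂ * sB))))) := by
      have hcont : Continuous (fun ε : ℝ => (μA + κ₁ * (iA - ε) - ε) *
          Real.exp (-(τ * (κ₂ * (sB + ε) + ε)))) := by fun_prop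
      have := (hcont.tendsto 0).mono_left (nhdsWithin_le_nhds (s := Set.Ioi (0:ℝ)))
      simpa using this
    exact le_of_tendsto hlim (eventually_mem_nhdsWithin.mono fun ε hε => key ε hε)
  -- I3 : sB ≤ μB + κ₃ sB + κ₄ sA
  have I3 : sB ≤ μB + κ₃ * sB + κ₄ * sA := by
    have key : ∀ ε > 0, sB ≤ μB + (κ₃ * (sB + ε) + ε) + (κ₄ * (sA + ε) + ε) := by
      intro ε hε
      obtain ⟨TB, hTB0, hTB⟩ := hformB_up ε hε
      obtain ⟨TA, hTA0, hTA⟩ := hformA_up ε hε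
      have hc3 := convK_event_le hh₃ hcB hB0 hMB hTB0 hTB (by linarith) ε hε
      have hc4 := convK_event_le hh₄ hcA hA0 hMA hTA0 hTA (by linarith) ε hε
      apply limsup_le_of_le hcbB_le
      filter_upwards [hc3, hc4, eventually_ge_atTop 0] with t h3t h4t ht0
      rw [heqB t ht0]
      have e3 : (1 - α) * convK h₃ lB t ≤ κ₃ * (sB + ε) + ε := by
        have h' := mul_le_mul_of_nonneg_left h3t h1α.le
        have he : (1 - α) * (l1 h₃ * (sB + ε) + ε) = κ₃ * (sB + ε) + (1 - α) * ε := by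
          rw [hκ₃]; ring
        have hαε2 : (1 - α) * ε ≤ ε := by
          have := mul_le_mul_of_nonneg_right (by linarith only [hα0] : 1 - α ≤ 1) hε.le
          linarith only [this]
        linarith only [h', he, hαε2]
      have e4 : α * convK h₄ lA t ≤ κ₄ * (sA + ε) + ε := by
        have h' := mul_le_mul_of_nonneg_left h4t hα0.le
        have he : α * (l1 h₄ * (sA + ε) + ε) = κ₄ * (sA + ε) + α * ε := by
          rw [hκ₄]; ring
        have hαε : α * ε ≤ ε := by
          have := mul_le_mul_of_nonneg_right hα1.le hε.le; linarith only [this]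
        linarith only [h', he, hαε]
      linarith
    have hlim : Tendsto (fun ε : ℝ => μB + (κ₃ * (sB + ε) + ε) + (κ₄ * (sA + ε) + ε))
        (𝓝[>] 0) (𝓝 (μB + κ₃ * sB + κ₄ * sA)) := by
      have hcont : Continuous (fun ε : ℝ => μB + (κ₃ * (sB + ε) + ε) + (κ₄ * (sA + ε) + ε)) := by
        fun_prop
      have := (hcont.tendsto 0).mono_left (nhdsWithin_le_nhds (s := Set.Ioi (0:ℝ)))
      have heval : μB + (κ₃ * (sB + 0) + 0) + (κ₄ * (sA + 0) + 0) = μB + κ₃ * sB + κ₄ * sA := by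
        ring
      simpa [heval] using this
    exact ge_of_tendsto hlim (eventually_mem_nhdsWithin.mono fun ε hε => key ε hε)
  -- I4 : μB + κ₃ iB + κ₄ iA ≤ iB
  have I4 : μB + κ₃ * iB + κ₄ * iA ≤ iB := by
    have key : ∀ ε > 0, μB + (κ₃ * (iB - ε) - ε) + (κ₄ * (iA - ε) - ε) ≤ iB := by
      intro ε hε
      obtain ⟨TB, hTB0, hTB⟩ := hformB_dn ε hε
      obtain ⟨TA, hTA0, hTA⟩ := hformA_dn ε hε
      have hc3 := convK_event_ge hh₃ hcB hB0 hTB0 hTB (le_max_left _ _) ε hε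
      have hc4 := convK_event_ge hh₄ hcA hA0 hTA0 hTA (le_max_left _ _) ε hε
      apply le_liminf_of_le hcbB_ge
      filter_upwards [hc3, hc4, eventually_ge_atTop 0] with t h3t h4t ht0
      rw [heqB t ht0]
      have e3 : κ₃ * (iB - ε) - ε ≤ (1 - α) * convK h₃ lB t := by
        have h' := mul_le_mul_of_nonneg_left h3t h1α.le
        have he : (1 - α) * (l1 h₃ * max 0 (iB - ε) - ε) =
            κ₃ * max 0 (iB - ε) - (1 - α) * ε := by rw [hκ₃]; ring
        have hmax := mul_le_mul_of_nonneg_left (le_max_right 0 (iB - ε)) hκ₃0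
        have hαε2 : (1 - α) * ε ≤ ε := by
          have := mul_le_mul_of_nonneg_right (by linarith only [hα0] : 1 - α ≤ 1) hε.le
          linarith only [this]
        linarith only [h', he, hmax, hαε2]
      have e4 : κ₄ * (iA - ε) - ε ≤ α * convK h₄ lA t := by
        have h' := mul_le_mul_of_nonneg_left h4t hα0.le
        have he : α * (l1 h₄ * max 0 (iA - ε) - ε) = κ₄ * max 0 (iA - ε) - α * ε := by
          rw [hκ₄]; ring
        have hmax := mul_le_mul_of_nonneg_left (le_max_right 0 (iA - ε)) hk4.le
        have hαε : α * ε ≤ ε := by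
          have := mul_le_mul_of_nonneg_right hα1.le hε.le; linarith only [this]
        linarith only [h', he, hmax, hαε]
      linarith
    have hlim : Tendsto (fun ε : ℝ => μB + (κ₃ * (iB - ε) - ε) + (κ₄ * (iA - ε) - ε))
        (𝓝[>] 0) (𝓝 (μB + κ₃ * iB + κ₄ * iA)) := by
      have hcont : Continuous (fun ε : ℝ => μB + (κ₃ * (iB - ε) - ε) + (κ₄ * (iA - ε) - ε)) := by
        fun_prop
      have := (hcont.tendsto 0).mono_left (nhdsWithin_le_nhds (s := Set.Ioi (0:ℝ)))
      have heval : μB + (κ₃ * (iB - 0) - 0) + (κ₄ * (iA - 0) - 0) = μB + κ₃ * iB + κ₄ * iA := by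
        ring
      simpa [heval] using this
    exact le_of_tendsto hlim (eventually_mem_nhdsWithin.mono fun ε hε => key ε hε)
  -- endgame algebra
  set Yi := Real.exp (-(τ * (κ₂ * iB))) with hYidef
  set Ys := Real.exp (-(τ * (κ₂ * sB))) with hYsdef
  have hDi : 0 < 1 - κ₁ * Yi := D_pos hκ₁0 hk2 ha0 hτ hcrit hiB_ge_m
  have hDs : 0 < 1 - κ₁ * Ys := D_pos hκ₁0 hk2 ha0 hτ hcrit hsB_ge_m
  have hYi0 : 0 < Yi := Real.exp_pos _
  have hYs0 : 0 < Ys := Real.exp_pos _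
  have hsA_le : sA ≤ μA * Yi / (1 - κ₁ * Yi) := by
    rw [le_div_iff₀ hDi]
    have hexp1 : (μA + κ₁ * sA) * Yi = μA * Yi + κ₁ * sA * Yi := by ring
    have hg : sA * (1 - κ₁ * Yi) = sA - κ₁ * sA * Yi := by ring
    linarith only [I1, hexp1, hg]
  have hiA_ge : μA * Ys / (1 - κ₁ * Ys) ≤ iA := by
    rw [div_le_iff₀ hDs]
    have hexp1 : (μA + κ₁ * iA) * Ys = μA * Ys + κ₁ * iA * Ys := by ring
    have hg : iA * (1 - κ₁ * Ys) = iA - κ₁ * iA * Ys := by ring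
    linarith only [I2, hexp1, hg]
  have hPhiform : ∀ x : ℝ, a / κ₂ ≤ x → PhiE κ₁ κ₂ a b μA τ x =
      (μB + κ₄ * (μA * Real.exp (-(τ * (κ₂ * x))) /
        (1 - κ₁ * Real.exp (-(τ * (κ₂ * x)))))) / (1 - κ₃) := by
    intro x hx
    have hD := D_pos hκ₁0 hk2 ha0 hτ hcrit hx
    unfold PhiE
    rw [ha, hb]
    field_simp
  have hsB_le_Phi : sB ≤ PhiE κ₁ κ₂ a b μA τ iB := by
    rw [hPhiform iB hiB_ge_m, le_div_iff₀ h1k3]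
    have h1 : κ₄ * sA ≤ κ₄ * (μA * Yi / (1 - κ₁ * Yi)) :=
      mul_le_mul_of_nonneg_left hsA_le hk4.le
    have hg : sB * (1 - κ₃) = sB - κ₃ * sB := by ring
    linarith only [I3, h1, hg]
  have hPhi_le_iB : PhiE κ₁ κ₂ a b μA τ sB ≤ iB := by
    rw [hPhiform sB hsB_ge_m, div_le_iff₀ h1k3]
    have h1 : κ₄ * (μA * Ys / (1 - κ₁ * Ys)) ≤ κ₄ * iA :=
      mul_le_mul_of_nonneg_left hiA_ge hk4.le
    have hg : iB * (1 - κ₃) = iB - κ₃ * iB := by ring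
    linarith only [I4, h1, hg]
  have hlip := PhiE_lip hκ₁0 hk2 ha0 hb0 hμA hτ hcrit hiB_ge_m hsB_ge_m
  have habs : |PhiE κ₁ κ₂ a b μA τ iB - PhiE κ₁ κ₂ a b μA τ sB| ≥ sB - iB := by
    have := le_abs_self (PhiE κ₁ κ₂ a b μA τ iB - PhiE κ₁ κ₂ a b μA τ sB)
    linarith
  have habs2 : |iB - sB| = sB - iB := by
    rw [abs_of_nonpos (by linarith)]; ring
  have hr0 : 0 ≤ b * μA * τ * Real.exp (-(τ * a)) / (1 - κ₁ * Real.exp (-(τ * a))) ^ 2 := by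
    have : 0 < 1 - κ₁ * Real.exp (-(τ * a)) := by linarith
    positivity
  have hBeq : sB = iB := by
    rw [habs2] at hlip
    have hd : sB - iB ≤ b * μA * τ * Real.exp (-(τ * a)) /
        (1 - κ₁ * Real.exp (-(τ * a))) ^ 2 * (sB - iB) := le_trans habs hlip
    have hle : sB - iB ≤ 0 := by
      by_contra hcon
      push_neg at hcon
      have hmul := mul_pos (by linarith only [hr] :
        0 < 1 - b * μA * τ * Real.exp (-(τ * a)) /
          (1 - κ₁ * Real.exp (-(τ * a))) ^ 2) hcon
      have hg : (1 - b * μA * τ * Real.exp (-(τ * a)) /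
          (1 - κ₁ * Real.exp (-(τ * a))) ^ 2) * (sB - iB) =
          (sB - iB) - b * μA * τ * Real.exp (-(τ * a)) /
          (1 - κ₁ * Real.exp (-(τ * a))) ^ 2 * (sB - iB) := by ring
      linarith only [hmul, hg, hd]
    linarith only [hle, hiB_le_sB]
  have hfixB : PhiE κ₁ κ₂ a b μA τ sB = sB := by
    have h1 : sB ≤ PhiE κ₁ κ₂ a b μA τ sB := by rw [hBeq] at hsB_le_Phi ⊢; exact hsB_le_Phi
    have h2 : PhiE κ₁ κ₂ a b μA τ sB ≤ sB := by
      calc PhiE κ₁ κ₂ a b μA τ sB ≤ iB := hPhi_le_iB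
      _ ≤ sB := hiB_le_sB
    linarith
  have hℓeq : sB = ℓ :=
    PhiE_unique hκ₁0 hk2 ha0 hb0 hμA hτ hcrit hr hsB_ge_m hℓc hfixB hℓfix
  have hiBℓ : iB = ℓ := by rw [← hBeq]; exact hℓeq
  have htB : Tendsto lB atTop (𝓝 ℓ) := by
    refine tendsto_order.2 ⟨fun c hc => ?_, fun c hc => ?_⟩
    · exact eventually_lt_of_lt_liminf (by rw [← hiBdef, hiBℓ]; exact hc) hbB_ge
    · exact eventually_lt_of_limsup_lt (by rw [← hsBdef, hℓeq]; exact hc) hbB_le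
  -- lA limit
  have hYY : Yi = Ys := by rw [hYidef, hYsdef, hBeq]
  have hAeq : sA = μA * Yi / (1 - κ₁ * Yi) := by
    apply le_antisymm hsA_le
    calc μA * Yi / (1 - κ₁ * Yi) = μA * Ys / (1 - κ₁ * Ys) := by rw [hYY]
    _ ≤ iA := hiA_ge
    _ ≤ sA := hiA_le_sA
  have hAeq2 : iA = μA * Yi / (1 - κ₁ * Yi) := by
    apply le_antisymm
    · calc iA ≤ sA := hiA_le_sA
      _ = μA * Yi / (1 - κ₁ * Yi) := hAeq
    · calc μA * Yi / (1 - κ₁ * Yi) = μA * Ys / (1 - κ₁ * Ys) := by rw [hYY]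
      _ ≤ iA := hiA_ge
  have hYℓ : Yi = Real.exp (-(τ * (κ₂ * ℓ))) := by rw [hYidef, hiBℓ]
  have htA : Tendsto lA atTop
      (𝓝 (μA * Real.exp (-(τ * (κ₂ * ℓ))) / (1 - κ₁ * Real.exp (-(τ * (κ₂ * ℓ)))))) := by
    have htarget : μA * Real.exp (-(τ * (κ₂ * ℓ))) / (1 - κ₁ * Real.exp (-(τ * (κ₂ * ℓ)))) =
        μA * Yi / (1 - κ₁ * Yi) := by rw [hYℓ]
    rw [htarget]
    refine tendsto_order.2 ⟨fun c hc => ?_, fun c hc => ?_⟩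
    · exact eventually_lt_of_lt_liminf (by rw [← hiAdef, hAeq2]; exact hc) hbA_ge
    · exact eventually_lt_of_limsup_lt (by rw [← hsAdef, hAeq]; exact hc) hbA_le
  exact ⟨htB, htA⟩

/-- Convergence for exponential inhibition `Φ_{B→A}(x) = exp(-τx)` with
`Φ_{A→B}(x) = x`, under `κ₁e^{-τa} < 1` and the contraction condition `r(τ) < 1`. -/
theorem stmt19
    (α : ℝ) (hα : α ∈ Set.Ioo (0:ℝ) 1)
    (h₁ h₂ h₃ h₄ : ℝ → ℝ)
    (hh₁ : KernelOK h₁) (hh₂ : KernelOK h₂) (hh₃ : KernelOK h₃) (hh₄ : KernelOK h₄)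
    (κ₁ κ₂ κ₃ κ₄ : ℝ)
    (hκ₁ : κ₁ = α * l1 h₁) (hκ₂ : κ₂ = (1 - α) * l1 h₂)
    (hκ₃ : κ₃ = (1 - α) * l1 h₃) (hκ₄ : κ₄ = α * l1 h₄)
    
    (μA μB : ℝ) (hμA : 0 < μA) (hμB : 0 ≤ μB)
    (τ : ℝ) (hτ : 0 < τ)
    (a b : ℝ) (ha : a = μB * κ₂ / (1 - κ₃)) (hb : b = κ₂ * κ₄ / (1 - κ₃))
    (hk2 : 0 < κ₂) (hk4 : 0 < κ₄) (hk3 : κ₃ < 1)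
    (hcrit : κ₁ * Real.exp (-(τ * a)) < 1)
    (hr : b * μA * τ * Real.exp (-(τ * a)) /
        (1 - κ₁ * Real.exp (-(τ * a))) ^ 2 < 1) :
    ∃ ℓ : ℝ,
      (μB / (1 - κ₃) ≤ ℓ ∧
        a / κ₂ + b * μA * Real.exp (-(τ * (κ₂ * ℓ))) /
          (κ₂ * (1 - κ₁ * Real.exp (-(τ * (κ₂ * ℓ))))) = ℓ ∧
        ∀ x : ℝ, μB / (1 - κ₃) ≤ x →
          a / κ₂ + b * μA * Real.exp (-(τ * (κ₂ * x))) /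
            (κ₂ * (1 - κ₁ * Real.exp (-(τ * (κ₂ * x))))) = x → x = ℓ) ∧
      ∀ lA lB,
        IsLinSys α h₁ h₂ h₃ h₄
          (fun x => Real.exp (-(τ * x))) (fun x => x) μA μB lA lB →
        Tendsto lB atTop (𝓝 ℓ) ∧
        Tendsto lA atTop (𝓝 (μA * Real.exp (-(τ * (κ₂ * ℓ))) /
          (1 - κ₁ * Real.exp (-(τ * (κ₂ * ℓ)))))) := by
  have hα0 := hα.1
  have hα1 := hα.2
  have h1α : 0 < 1 - α := by linarith
  have hκ₁0 : 0 ≤ κ₁ := by rw [hκ₁]; exact mul_nonneg hα0.le (l1_nonneg hh₁.1)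
  have hκ₃0 : 0 ≤ κ₃ := by rw [hκ₃]; exact mul_nonneg h1α.le (l1_nonneg hh₃.1)
  have h1k3 : 0 < 1 - κ₃ := by linarith
  have ha0 : 0 ≤ a := by rw [ha]; positivity
  have hb0 : 0 < b := by rw [hb]; positivity
  have hmm : μB / (1 - κ₃) = a / κ₂ := by rw [ha]; field_simp
  obtain ⟨ℓ, hℓc, hℓfix⟩ := PhiE_exists hκ₁0 hk2 ha0 hb0 hμA hτ hcrit
  refine ⟨ℓ, ⟨?_, ?_, ?_⟩, ?_⟩
  · rw [hmm]; exact hℓc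
  · have := hℓfix
    unfold PhiE at this
    exact this
  · intro x hx hfx
    have hx' : a / κ₂ ≤ x := by rw [← hmm]; exact hx
    have hfx' : PhiE κ₁ κ₂ a b μA τ x = x := by unfold PhiE; exact hfx
    exact PhiE_unique hκ₁0 hk2 ha0 hb0 hμA hτ hcrit hr hx' hℓc hfx' hℓfix
  · intro lA lB hsys
    exact sys_main hα hh₁.1 hh₂.1 hh₃.1 hh₄.1 hκ₁ hκ₂ hκ₃ hκ₄ hμA hμB hτ ha hb
      hk2 hk4 hk3 hcrit hr hℓc hℓfix hsys
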